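/- Let V be a smooth, periodic, not identically zero function on ℝ, and let φ ∈ C_0^∞(ℝ^d) be a not identically zero bump function. Then there exist c > 0 and λ₀ ≥ 1 such that for every λ > λ₀, ‖φ(x) V(λφ(x))‖_{L²(ℝ^d)} ≥ c. -/

import Mathlib

open MeasureTheory
open scoped ENNReal


lemma oneD_measure {h : ℝ → ℝ} {M m δ L t₀ lam t₁ t₂ : ℝ}
    (hM : 0 < M) (hm : 0 < m) (hδ : 0 < δ) (hδL : δ ≤ L / 4) (hL : 0 < L)
    (hlip : ∀ a b, |h a - h b| ≤ M * |a - b|)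
    (ht12 : t₁ ≤ t₂) (h1 : 3 * m / 4 ≤ h t₁) (h2 : h t₂ = 0)
    (hlam : (16 * δ + 8 * L) / m ≤ lam) (hlam1 : 1 ≤ lam) :
    ENNReal.ofReal (m * δ / (8 * L * M)) ≤
      volume {t : ℝ | m / 4 ≤ h t ∧ h t ≤ m / 2 ∧ ∃ k : ℤ, |lam * h t - (t₀ + k * L)| ≤ δ} := by
  have hlam0 : (0:ℝ) < lam := lt_of_lt_of_le one_pos hlam1
  have hcont : Continuous h := by
    have hl : LipschitzWith (Real.toNNReal M) h := by
      apply LipschitzWith.of_dist_le_mul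
      intro a b
      rw [Real.dist_eq, Real.dist_eq, Real.coe_toNNReal _ hM.le]
      exact hlip a b
    exact hl.continuous
  set a : ℝ := (lam * m / 4 + δ - t₀) / L with ha
  set b : ℝ := (lam * m / 2 - δ - t₀) / L with hb
  set K : Finset ℤ := Finset.Icc ⌈a⌉ ⌊b⌋ with hK
  set v : ℤ → ℝ := fun k => (t₀ + k * L) / lam with hv
  set ρ : ℝ := δ / (lam * M) with hρ
  have hρ0 : 0 < ρ := div_pos hδ (mul_pos hlam0 hM)
  -- bounds on v k for k ∈ K
  have hvlow : ∀ k ∈ K, m / 4 + δ / lam ≤ v k := by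
    intro k hk
    have h1 : a ≤ (k : ℝ) := le_trans (Int.le_ceil a) (by exact_mod_cast (Finset.mem_Icc.1 hk).1)
    have h2 : lam * m / 4 + δ - t₀ ≤ k * L := by
      rw [ha, div_le_iff₀ hL] at h1; linarith
    show m / 4 + δ / lam ≤ (t₀ + (k:ℝ) * L) / lam
    rw [le_div_iff₀ hlam0]
    have heq : (m/4 + δ/lam) * lam = lam * m / 4 + δ := by field_simp
    rw [heq]; linarith
  have hvhigh : ∀ k ∈ K, v k ≤ m / 2 - δ / lam := by
    intro k hk
    have h1 : (k : ℝ) ≤ b := le_trans (by exact_mod_cast (Finset.mem_Icc.1 hk).2) (Int.floor_le b)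
    have h2 : k * L ≤ lam * m / 2 - δ - t₀ := by
      rw [hb, le_div_iff₀ hL] at h1; linarith
    show (t₀ + (k:ℝ) * L) / lam ≤ m / 2 - δ / lam
    rw [div_le_iff₀ hlam0]
    have : (m/2 - δ/lam) * lam = lam * m / 2 - δ := by field_simp
    rw [this]; linarith
  -- choose points via IVT
  have hex : ∀ k ∈ K, ∃ s ∈ Set.Icc t₁ t₂, h s = v k := by
    intro k hk
    have hv1 : v k ∈ Set.Icc (h t₂) (h t₁) := by
      constructor
      · rw [h2]
        have := hvlow k hk
        have : 0 < m/4 + δ/lam := by positivity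
        linarith [hvlow k hk]
      · have := hvhigh k hk
        have hδl : 0 < δ / lam := by positivity
        linarith
    have := intermediate_value_Icc' ht12 hcont.continuousOn hv1
    obtain ⟨s, hs, hhs⟩ := this
    exact ⟨s, hs, hhs⟩
  choose! s hsmem hs using hex
  set E : ℤ → Set ℝ := fun k => Set.Icc (s k) (s k + ρ) with hE
  -- each E k lands in the target set
  have hclose : ∀ k ∈ K, ∀ t ∈ E k, |h t - v k| ≤ δ / lam := by
    intro k hk t ht
    have h1 : |t - s k| ≤ ρ := by
      rw [abs_le]; constructor <;> [linarith [ht.1]; linarith [ht.2]]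
    calc |h t - v k| = |h t - h (s k)| := by rw [hs k hk]
      _ ≤ M * |t - s k| := hlip t (s k)
      _ ≤ M * ρ := by nlinarith [abs_nonneg (t - s k)]
      _ = δ / lam := by rw [hρ]; field_simp
  have hsub : ∀ k ∈ K, E k ⊆ {t : ℝ | m / 4 ≤ h t ∧ h t ≤ m / 2 ∧
      ∃ k : ℤ, |lam * h t - (t₀ + k * L)| ≤ δ} := by
    intro k hk t ht
    have hc := hclose k hk t ht
    have habs := abs_le.1 hc
    refine ⟨by linarith [hvlow k hk], by linarith [hvhigh k hk], ⟨k, ?_⟩⟩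
    have : lam * h t - (t₀ + k * L) = lam * (h t - v k) := by
      rw [hv]; field_simp
    rw [this, abs_mul, abs_of_pos hlam0]
    calc lam * |h t - v k| ≤ lam * (δ / lam) := by
          exact mul_le_mul_of_nonneg_left hc hlam0.le
      _ = δ := by field_simp
  -- disjointness
  have hdisj : (K : Set ℤ).PairwiseDisjoint E := by
    intro j hj k hk hjk
    rw [Function.onFun, Set.disjoint_left]
    intro t htj htk
    have h1 := hclose j hj t htj
    have h2 := hclose k hk t htk
    have hvv : |v j - v k| ≤ 2 * (δ / lam) := by
      have heq : v j - v k = (h t - v k) - (h t - v j) := by ring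
      rw [heq]
      exact le_trans (abs_sub _ _) (by linarith)
    have hjk1 : (1:ℝ) ≤ |(j:ℝ) - (k:ℝ)| := by
      have hne : j - k ≠ 0 := sub_ne_zero.2 hjk
      have h1 := Int.one_le_abs hne
      calc (1:ℝ) = ((1:ℤ):ℝ) := by norm_num
        _ ≤ ((|j - k| : ℤ) : ℝ) := by exact_mod_cast h1
        _ = |((j - k : ℤ) : ℝ)| := by rw [Int.cast_abs]
        _ = |(j:ℝ) - (k:ℝ)| := by push_cast; ring_nf
    have hvv2 : L / lam ≤ |v j - v k| := by
      have heq2 : v j - v k = ((j : ℝ) - k) * (L / lam) := by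
        show (t₀ + (j:ℝ)*L)/lam - (t₀ + (k:ℝ)*L)/lam = _
        field_simp; ring
      rw [heq2, abs_mul, abs_of_pos (div_pos hL hlam0)]
      have := mul_le_mul_of_nonneg_right hjk1 (div_pos hL hlam0).le
      linarith
    have hcontra : L ≤ 2 * δ := by
      have hle := le_trans hvv2 hvv
      rw [div_le_iff₀ hlam0] at hle
      have : 2 * (δ / lam) * lam = 2 * δ := by field_simp
      linarith [this ▸ hle]
    linarith
  -- measure bound
  have hmeas : volume (⋃ k ∈ K, E k) = ∑ k ∈ K, volume (E k) := by
    apply measure_biUnion_finset hdisj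
    intro k _; exact measurableSet_Icc
  have hEk : ∀ k ∈ K, volume (E k) = ENNReal.ofReal ρ := by
    intro k _; rw [hE]; simp [Real.volume_Icc]
  have hsum : ∑ k ∈ K, volume (E k) = ((K.card : ℕ) : ENNReal) * ENNReal.ofReal ρ := by
    rw [Finset.sum_congr rfl hEk, Finset.sum_const, nsmul_eq_mul]
  -- cardinality bound
  have hcard : lam * m / (8 * L) ≤ (K.card : ℝ) := by
    have h1 : (⌈a⌉ : ℝ) < a + 1 := Int.ceil_lt_add_one a
    have h2 : b - 1 < (⌊b⌋ : ℝ) := Int.sub_one_lt_floor b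
    have hba : lam * m / (8 * L) ≤ b - a - 1 := by
      have hmain : 2 * δ + L ≤ lam * m / 8 := by
        rw [div_le_iff₀ hm] at hlam; nlinarith
      have heq : b - a - 1 = (lam * m / 4 - 2 * δ - L) / L := by
        rw [ha, hb]; field_simp; ring
      rw [heq, div_le_div_iff₀ (by positivity) hL]
      nlinarith [mul_le_mul_of_nonneg_right hmain hL.le]
    have hcard' : ((⌊b⌋ + 1 - ⌈a⌉ : ℤ) : ℝ) ≤ (K.card : ℝ) := by
      rw [hK, Int.card_Icc]
      exact_mod_cast Int.self_le_toNat _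
    push_cast at hcard'
    linarith
  calc ENNReal.ofReal (m * δ / (8 * L * M))
      ≤ ENNReal.ofReal ((K.card : ℝ) * ρ) := by
        apply ENNReal.ofReal_le_ofReal
        rw [hρ]
        calc m * δ / (8 * L * M) = (lam * m / (8 * L)) * (δ / (lam * M)) := by
              field_simp
          _ ≤ (K.card : ℝ) * (δ / (lam * M)) := by
              apply mul_le_mul_of_nonneg_right hcard hρ0.le
    _ = ((K.card : ℕ) : ENNReal) * ENNReal.ofReal ρ := by
        rw [ENNReal.ofReal_mul (by positivity), ENNReal.ofReal_natCast]
    _ = ∑ k ∈ K, volume (E k) := hsum.symm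
    _ = volume (⋃ k ∈ K, E k) := hmeas.symm
    _ ≤ _ := measure_mono (Set.iUnion₂_subset hsub)


lemma coord_abs_le_norm {n : ℕ} (x : EuclideanSpace ℝ (Fin n)) (i : Fin n) : |x i| ≤ ‖x‖ := by
  rw [EuclideanSpace.norm_eq, ← Real.sqrt_sq_eq_abs]
  apply Real.sqrt_le_sqrt
  exact Finset.single_le_sum (f := fun j => ‖x j‖ ^ 2) (fun j _ => by positivity)
    (Finset.mem_univ i) |>.trans_eq' (by rw [Real.norm_eq_abs, sq_abs])

set_option maxHeartbeats 1000000 in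
lemma key (n : ℕ)
    (V : ℝ → ℝ) (hVc : Continuous V) (L : ℝ) (hL : 0 < L)
    (hper : Function.Periodic V L) (hVne : ∃ t, V t ≠ 0)
    (φ : EuclideanSpace ℝ (Fin (n+1)) → ℝ) (hφ : ContDiff ℝ (⊤ : ℕ∞) φ)
    (hφc : HasCompactSupport φ) (hφpos : ∃ x, 0 < φ x) :
    ∃ c > 0, ∃ lam₀ ≥ (1 : ℝ), ∀ lam > lam₀,
      c ≤ (eLpNorm (fun x => φ x * V (lam * φ x)) 2 volume).toReal := by
  classical
  obtain ⟨x₀, hx₀⟩ := hφpos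
  set m := φ x₀ with hmdef
  have hm0 : 0 < m := hx₀
  -- Lipschitz constant
  obtain ⟨C, hC⟩ := ContDiff.lipschitzWith_of_hasCompactSupport hφc hφ (by simp)
  set M : ℝ := (C : ℝ) + 1 with hMdef
  have hM0 : 0 < M := by positivity
  have hlipφ : ∀ a b, |φ a - φ b| ≤ M * dist a b := by
    intro a b
    have h1 := hC.dist_le_mul a b
    rw [Real.dist_eq] at h1
    nlinarith [(dist_nonneg : 0 ≤ dist a b), C.coe_nonneg]
  -- the bump interval for V
  obtain ⟨t₀, ht₀⟩ := hVne
  set ε : ℝ := V t₀ ^ 2 / 2 with hεdef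
  have hVt₀ : 0 < V t₀ ^ 2 := (sq_nonneg (V t₀)).lt_of_ne (Ne.symm (pow_ne_zero 2 ht₀))
  have hε0 : 0 < ε := by rw [hεdef]; linarith
  have hopen : IsOpen {s : ℝ | ε < V s ^ 2} := isOpen_lt continuous_const (hVc.pow 2)
  have ht₀mem : t₀ ∈ {s : ℝ | ε < V s ^ 2} := by
    simp only [Set.mem_setOf_eq, hεdef]
    linarith
  obtain ⟨δ₂, hδ₂0, hball⟩ := Metric.isOpen_iff.1 hopen t₀ ht₀mem
  set δ : ℝ := min (δ₂ / 2) (L / 4) with hδdef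
  have hδ0 : 0 < δ := lt_min (by linarith) (by linarith)
  have hδL : δ ≤ L / 4 := min_le_right _ _
  have hVband : ∀ (k : ℤ) (s : ℝ), |s - (t₀ + k * L)| ≤ δ → ε ≤ V s ^ 2 := by
    intro k s hs
    have h1 : V (s - k * L) = V s := hper.sub_int_mul_eq k
    rw [← h1]
    refine le_of_lt (hball ?_)
    rw [Metric.mem_ball, Real.dist_eq]
    have heq : s - k * L - t₀ = s - (t₀ + k * L) := by ring
    rw [heq]
    exact lt_of_le_of_lt hs (lt_of_le_of_lt (min_le_left _ _) (by linarith))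
  -- support radius
  obtain ⟨R₀, hR₀⟩ := hφc.isBounded.subset_closedBall 0
  have hx₀mem : x₀ ∈ tsupport φ := subset_tsupport φ (by
    simp only [Function.mem_support]; exact ne_of_gt hx₀)
  have hx₀R : ‖x₀‖ ≤ R₀ := by
    have := hR₀ hx₀mem
    rwa [Metric.mem_closedBall, dist_zero_right] at this
  set t₁ : ℝ := x₀ 0 with ht₁def
  set t₂ : ℝ := R₀ + 1 with ht₂def
  have ht12 : t₁ ≤ t₂ := by
    have h1 := coord_abs_le_norm x₀ 0
    have := le_abs_self t₁
    rw [ht₁def]; rw [ht₂def]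
    calc x₀ 0 ≤ |x₀ 0| := le_abs_self _
      _ ≤ ‖x₀‖ := h1
      _ ≤ R₀ + 1 := by linarith
  -- the product decomposition
  set G : ℝ × (Fin n → ℝ) → EuclideanSpace ℝ (Fin (n+1)) := fun p =>
    (MeasurableEquiv.toLp 2 (Fin (n+1) → ℝ))
      ((MeasurableEquiv.piFinSuccAbove (fun _ => ℝ) 0).symm p) with hGdef
  have hGmp : MeasurePreserving G volume volume :=
    ((EuclideanSpace.volume_preserving_symm_measurableEquiv_toLp (Fin (n+1))).symm).comp
      ((volume_preserving_piFinSuccAbove (fun _ => ℝ) 0).symm)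
  have hGcoord : ∀ (t : ℝ) (y : Fin n → ℝ) (i : Fin (n+1)),
      G (t, y) i = Fin.cons (α := fun _ : Fin (n+1) => ℝ) t y i := by
    intro t y i
    simp [hGdef, MeasurableEquiv.coe_toLp, MeasurableEquiv.piFinSuccAbove,
      Fin.insertNth_zero']
  have hGdist : ∀ (a b : ℝ) (y : Fin n → ℝ), dist (G (a, y)) (G (b, y)) = |a - b| := by
    intro a b y
    rw [EuclideanSpace.dist_eq]
    rw [Fin.sum_univ_succ]
    have h0 : dist (G (a,y) 0) (G (b,y) 0) = |a - b| := by
      rw [hGcoord, hGcoord, Fin.cons_zero, Fin.cons_zero, Real.dist_eq]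
    have hsucc : ∀ j : Fin n, dist (G (a,y) j.succ) (G (b,y) j.succ) ^ 2 = 0 := by
      intro j
      rw [hGcoord, hGcoord, Fin.cons_succ, Fin.cons_succ, dist_self]
      norm_num
    rw [h0, Finset.sum_congr rfl (fun j _ => hsucc j)]
    simp [Real.sqrt_sq_eq_abs]
  set y₀ : Fin n → ℝ := fun j => x₀ j.succ with hy₀def
  have hGy₀ : G (t₁, y₀) = x₀ := by
    ext i
    rw [hGcoord]
    refine Fin.cases ?_ ?_ i
    · rw [Fin.cons_zero]
    · intro j; rw [Fin.cons_succ]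
  set r : ℝ := m / (4 * M * (n + 1)) with hrdef
  have hr0 : 0 < r := by positivity
  set Y := Metric.ball y₀ r with hYdef
  have hYpos : 0 < volume Y := Metric.measure_ball_pos _ _ hr0
  have hYfin : volume Y < ∞ := measure_ball_lt_top
  set γ : ℝ := (volume Y).toReal with hγdef
  have hγ0 : 0 < γ := ENNReal.toReal_pos hYpos.ne' hYfin.ne
  -- value at t₁ for y near y₀
  have hφG1 : ∀ y ∈ Y, 3 * m / 4 ≤ φ (G (t₁, y)) := by
    intro y hy
    have hdist : dist (G (t₁, y)) x₀ ≤ (n + 1) * r := by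
      rw [← hGy₀, EuclideanSpace.dist_eq]
      have hbound : ∀ i : Fin (n+1), dist (G (t₁,y) i) (G (t₁,y₀) i) ^ 2 ≤ r ^ 2 := by
        intro i
        refine Fin.cases ?_ ?_ i
        · rw [hGcoord, hGcoord, Fin.cons_zero, Fin.cons_zero, dist_self]
          simpa using sq_nonneg r
        · intro j
          rw [hGcoord, hGcoord, Fin.cons_succ, Fin.cons_succ]
          have h1 : dist (y j) (y₀ j) ≤ dist y y₀ := dist_le_pi_dist y y₀ j
          have h2 : dist y y₀ ≤ r := le_of_lt (Metric.mem_ball.1 hy)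
          nlinarith [(dist_nonneg : 0 ≤ dist (y j) (y₀ j))]
      calc Real.sqrt (∑ i, dist (G (t₁,y) i) (G (t₁,y₀) i) ^ 2)
          ≤ Real.sqrt ((n + 1) * r ^ 2) := by
            apply Real.sqrt_le_sqrt
            calc ∑ i, dist (G (t₁,y) i) (G (t₁,y₀) i) ^ 2
                ≤ ∑ _i : Fin (n+1), r ^ 2 := Finset.sum_le_sum (fun i _ => hbound i)
              _ = (n + 1) * r ^ 2 := by
                  rw [Finset.sum_const, Finset.card_univ, Fintype.card_fin, nsmul_eq_mul]
                  push_cast; ring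
        _ ≤ (n + 1) * r := by
            rw [show ((n:ℝ) + 1) * r ^ 2 = ((n:ℝ)+1) * r^2 from rfl]
            have h3 : ((n:ℝ) + 1) * r ^ 2 ≤ (((n:ℝ) + 1) * r) ^ 2 := by nlinarith [hr0.le]
            calc Real.sqrt (((n:ℝ) + 1) * r ^ 2) ≤ Real.sqrt ((((n:ℝ) + 1) * r) ^ 2) :=
                  Real.sqrt_le_sqrt h3
              _ = ((n:ℝ) + 1) * r := Real.sqrt_sq (by positivity)
    have heq : ((n:ℝ) + 1) * r = m / (4 * M) := by
      rw [hrdef]; field_simp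
    have h4 := hlipφ (G (t₁, y)) x₀
    have h5 : M * dist (G (t₁, y)) x₀ ≤ M * (m / (4 * M)) := by
      rw [← heq]
      exact mul_le_mul_of_nonneg_left hdist hM0.le
    have h6 : M * (m / (4 * M)) = m / 4 := by field_simp
    have h7 := abs_le.1 (le_trans h4 (h6 ▸ h5))
    rw [← hmdef] at h7
    linarith [h7.1]
  have hφG2 : ∀ y : Fin n → ℝ, φ (G (t₂, y)) = 0 := by
    intro y
    apply image_eq_zero_of_notMem_tsupport
    intro hmem
    have h1 : ‖G (t₂, y)‖ ≤ R₀ := by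
      have := hR₀ hmem
      rwa [Metric.mem_closedBall, dist_zero_right] at this
    have h2 : |t₂| ≤ ‖G (t₂, y)‖ := by
      have := coord_abs_le_norm (G (t₂, y)) 0
      rwa [hGcoord, Fin.cons_zero] at this
    have := le_trans (le_abs_self t₂) (le_trans h2 h1)
    rw [ht₂def] at this
    linarith
  -- final constants
  set β : ℝ := m * δ / (8 * L * M) with hβdef
  have hβ0 : 0 < β := by positivity
  set c₀ : ℝ := (m / 4) ^ 2 * ε with hc₀def
  have hc₀0 : 0 < c₀ := by positivity
  refine ⟨(c₀ * (β * γ)) ^ ((1:ℝ)/2), by positivity,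
    max 1 ((16 * δ + 8 * L) / m), le_max_left _ _, ?_⟩
  intro lam hlam
  have hlam1 : 1 ≤ lam := le_of_lt (lt_of_le_of_lt (le_max_left _ _) hlam)
  have hlamc : (16 * δ + 8 * L) / m ≤ lam := le_of_lt (lt_of_le_of_lt (le_max_right _ _) hlam)
  set S : Set ℝ := {v | m / 4 ≤ v ∧ v ≤ m / 2 ∧ ∃ k : ℤ, |lam * v - (t₀ + k * L)| ≤ δ}
    with hSdef
  have hSmeas : MeasurableSet S := by
    have hSeq : S = Set.Icc (m/4) (m/2) ∩ ⋃ k : ℤ, {v : ℝ | |lam * v - (t₀ + k * L)| ≤ δ} := by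
      ext v
      simp only [hSdef, Set.mem_setOf_eq, Set.mem_inter_iff, Set.mem_Icc, Set.mem_iUnion,
        and_assoc]
    rw [hSeq]
    exact measurableSet_Icc.inter (MeasurableSet.iUnion fun k =>
      (isClosed_le (((continuous_const.mul continuous_id).sub continuous_const).abs) continuous_const).measurableSet)
  set A : Set (EuclideanSpace ℝ (Fin (n+1))) := φ ⁻¹' S with hAdef
  have hAmeas : MeasurableSet A := hφ.continuous.measurable hSmeas
  -- slice estimate
  have hslice : ∀ y ∈ Y, ENNReal.ofReal β ≤ volume {t : ℝ | φ (G (t, y)) ∈ S} := by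
    intro y hy
    have hlip1 : ∀ a b : ℝ, |φ (G (a, y)) - φ (G (b, y))| ≤ M * |a - b| := by
      intro a b
      have := hlipφ (G (a, y)) (G (b, y))
      rwa [hGdist] at this
    exact oneD_measure hM0 hm0 hδ0 hδL hL hlip1 ht12 (hφG1 y hy) (hφG2 y) hlamc hlam1
  -- Fubini
  have hGA : volume A = ∫⁻ y, volume {t : ℝ | φ (G (t, y)) ∈ S} := by
    rw [← hGmp.measure_preimage hAmeas.nullMeasurableSet]
    rw [show (volume : Measure (ℝ × (Fin n → ℝ))) = (volume : Measure ℝ).prod volume from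
      Measure.volume_eq_prod _ _]
    rw [Measure.prod_apply_symm (hGmp.measurable hAmeas)]
    rfl
  have hAvol : ENNReal.ofReal (β * γ) ≤ volume A := by
    rw [hGA]
    calc ENNReal.ofReal (β * γ) = ENNReal.ofReal β * volume Y := by
          rw [ENNReal.ofReal_mul hβ0.le, hγdef, ENNReal.ofReal_toReal hYfin.ne]
      _ = ∫⁻ y, Y.indicator (fun _ => ENNReal.ofReal β) y := by
          rw [lintegral_indicator measurableSet_ball, setLIntegral_const, mul_comm]
      _ ≤ ∫⁻ y, volume {t : ℝ | φ (G (t, y)) ∈ S} := by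
          apply lintegral_mono
          intro y
          by_cases hy : y ∈ Y
          · rw [Set.indicator_of_mem hy]; exact hslice y hy
          · rw [Set.indicator_of_notMem hy]; exact zero_le
  -- pointwise estimate
  set f : EuclideanSpace ℝ (Fin (n+1)) → ℝ := fun x => φ x * V (lam * φ x) with hfdef
  have hpt : ∀ x, A.indicator (fun _ => ENNReal.ofReal c₀) x ≤ (‖f x‖₊ : ℝ≥0∞) ^ (2:ℝ) := by
    intro x
    by_cases hx : x ∈ A
    · rw [Set.indicator_of_mem hx]
      obtain ⟨h1, h2, k, hk⟩ := hx
      have hV2 : ε ≤ V (lam * φ x) ^ 2 := hVband k _ hk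
      have hf2 : c₀ ≤ f x ^ 2 := by
        rw [hfdef]
        simp only [mul_pow]
        have hφ2 : (m / 4) ^ 2 ≤ φ x ^ 2 := by nlinarith
        rw [hc₀def]
        nlinarith [sq_nonneg (V (lam * φ x)), sq_nonneg (φ x)]
      calc ENNReal.ofReal c₀ ≤ ENNReal.ofReal (f x ^ 2) := ENNReal.ofReal_le_ofReal hf2
        _ = (‖f x‖₊ : ℝ≥0∞) ^ (2:ℝ) := by
            rw [← enorm_eq_nnnorm, Real.enorm_eq_ofReal_abs,
              ENNReal.ofReal_rpow_of_nonneg (abs_nonneg _) (by norm_num : (0:ℝ) ≤ 2),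
              show (2:ℝ) = ((2:ℕ):ℝ) by norm_num, Real.rpow_natCast, sq_abs]
    · rw [Set.indicator_of_notMem hx]; exact zero_le
  have hlint : ENNReal.ofReal (c₀ * (β * γ)) ≤ ∫⁻ x, (‖f x‖₊ : ℝ≥0∞) ^ (2:ℝ) := by
    calc ENNReal.ofReal (c₀ * (β * γ))
        = ENNReal.ofReal c₀ * ENNReal.ofReal (β * γ) := ENNReal.ofReal_mul hc₀0.le
      _ ≤ ENNReal.ofReal c₀ * volume A := by gcongr
      _ = ∫⁻ x, A.indicator (fun _ => ENNReal.ofReal c₀) x := by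
          rw [lintegral_indicator hAmeas, setLIntegral_const, mul_comm]
      _ ≤ _ := lintegral_mono hpt
  -- conclude
  have hfc : Continuous f := hφ.continuous.mul (hVc.comp (continuous_const.mul hφ.continuous))
  have hfcs : HasCompactSupport f := by
    have : f = (fun x => φ x) * (fun x => V (lam * φ x)) := rfl
    rw [this]
    exact hφc.mul_right
  have hfmem : MemLp f 2 volume := hfc.memLp_of_hasCompactSupport hfcs
  have hfin : eLpNorm f 2 volume ≠ ∞ := hfmem.eLpNorm_ne_top
  rw [← ENNReal.ofReal_le_iff_le_toReal hfin]
  have hel : eLpNorm f 2 volume = (∫⁻ x, (‖f x‖₊ : ℝ≥0∞) ^ (2:ℝ)) ^ ((1:ℝ)/2) := by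
    rw [eLpNorm_eq_lintegral_rpow_enorm_toReal two_ne_zero ENNReal.ofNat_ne_top]
    simp only [enorm_eq_nnnorm]
    norm_num
  rw [hel]
  calc ENNReal.ofReal ((c₀ * (β * γ)) ^ ((1:ℝ)/2))
      = (ENNReal.ofReal (c₀ * (β * γ))) ^ ((1:ℝ)/2) :=
        (ENNReal.ofReal_rpow_of_pos (by positivity)).symm
    _ ≤ _ := ENNReal.rpow_le_rpow hlint (by norm_num)

/-- If `V` is a smooth, periodic, not identically zero function on `ℝ` and `φ` is a
nontrivial bump function on `ℝ^d`, then there exist `c > 0` and `λ₀ ≥ 1` such that for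
every `λ > λ₀`, `‖φ(x) V(λ φ(x))‖_{L²(ℝ^d)} ≥ c`. -/
theorem lower_bound_oscillating_profile (d : ℕ) (hd : 1 ≤ d)
    (V : ℝ → ℝ) (hV : ContDiff ℝ (⊤ : ℕ∞) V) (L : ℝ) (hL : 0 < L)
    (hper : Function.Periodic V L) (hVne : ∃ t, V t ≠ 0)
    (φ : EuclideanSpace ℝ (Fin d) → ℝ) (hφ : ContDiff ℝ (⊤ : ℕ∞) φ)
    (hφc : HasCompactSupport φ) (hφne : ∃ x, φ x ≠ 0) :
    ∃ c > 0, ∃ lam₀ ≥ (1 : ℝ), ∀ lam > lam₀,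
      c ≤ (eLpNorm (fun x => φ x * V (lam * φ x)) 2 volume).toReal := by
  obtain ⟨n, rfl⟩ : ∃ n, d = n + 1 := ⟨d - 1, (Nat.succ_pred_eq_of_pos hd).symm⟩
  obtain ⟨x₀, hx₀⟩ := hφne
  rcases hx₀.lt_or_gt with hneg | hpos
  · -- apply `key` to `-φ` and `t ↦ V (-t)`
    have hper' : Function.Periodic (fun t => V (-t)) L := by
      intro t
      simp only [neg_add]
      have : -t + -L = -t - L := by ring
      rw [this, hper.sub_eq]
    have hkey := key n (fun t => V (-t)) (hV.continuous.comp continuous_neg) L hL hper'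
      (by obtain ⟨t, ht⟩ := hVne; exact ⟨-t, by simpa using ht⟩)
      (fun x => -φ x) hφ.neg hφc.neg ⟨x₀, show (0:ℝ) < -φ x₀ from neg_pos.mpr hneg⟩
    obtain ⟨c, hc, lam₀, hlam₀, h⟩ := hkey
    refine ⟨c, hc, lam₀, hlam₀, fun lam hl => ?_⟩
    have hthis := h lam hl
    have heq : (fun x => -φ x * V (-(lam * -φ x))) = fun x => -(φ x * V (lam * φ x)) := by
      funext x
      rw [show -(lam * -φ x) = lam * φ x by ring]
      ring
    rw [heq, show (fun x => -(φ x * V (lam * φ x)))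
        = -(fun x => φ x * V (lam * φ x)) from rfl, eLpNorm_neg] at hthis
    exact hthis
  · exact key n V hV.continuous L hL hper hVne φ hφ hφc ⟨x₀, hpos⟩
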